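/- Consider the single-pass dyMEAN network built from: (i) the L-layer alternating encoder on two disjoint finite vertex sets V_{ES} (containing the shadow paratope V_S) and V_A (containing the native paratope V_P), with a bijection σ : V_S → V_P along which hidden states are shared, with arbitrary layer functions φ_m, φ_x, φ_h and the concrete geometric relation extractor T_R and geometric message scaler T_S; (ii) the prediction p_i = Softmax(φ_p(h_final(i))) for each i ∈ V_P, for an arbitrary function φ_p : ℝ^{d'} → ℝ^{n_a}; and (iii) docking: given any global minimizer (Q₀, t₀) over O(3) × ℝ³ of Σ_{i∈V_S} ‖Q₀ X_final(σ(i)) + t₀ 1ᵀ − X_final(i)‖_F², the docked coordinates are X̃_j = Q₀ X_final(j) + t₀ 1ᵀ for j ∈ V_A. Then dyMEAN is E(3)-equivariant: for any Q₁, Q₂ ∈ O(3) and t₁, t₂ ∈ ℝ³, if the input coordinates on V_{ES} are replaced by Q₁ X(i) + t₁ 1ᵀ and those on V_A by Q₂ X(i) + t₂ 1ᵀ, then (a) all predicted distributions p_i, i ∈ V_P, are unchanged, and (b) the corresponding pair (Q₁ Q₀ Q₂ᵀ, Q₁ t₀ + t₁ − Q₁ Q₀ Q₂ᵀ t₂)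 is a global minimizer of the transformed alignment problem whose docked coordinates equal Q₁ X̃_j + t₁ 1ᵀ for every j ∈ V_A. -/

import Mathlib

/-!
The relation extractor `T_R` sees the coordinates only through distances between atoms of one
graph, so under an isometry `(Q, t)` of that graph all messages `m_ij`, hence all hidden states,
are unchanged; the coordinate update adds to `X(i)` a combination of centred coordinates
`X(i) − μ_j 1ᵀ`, which are only rotated by `Q`, so coordinates move by `(Q, t)` again. The two
graphs exchange nothing but hidden states, so each may be moved by its own isometry, and induction
over the layers makes the encoder equivariant. For docking, the loss of the moved data at the
conjugate `g₁ g g₂⁻¹` equals the original loss at `g`, and conjugation is a bijection of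
`O(3) × ℝ³`, so minimizers correspond.
-/

open Matrix BigOperators

attribute [local instance] Classical.propDecidable

noncomputable section

/-- Euclidean distance between the `p`-th column of `X` and the `q`-th column of `Y`. -/
def colDist {ci cj : ℕ} (X : Matrix (Fin 3) (Fin ci) ℝ) (Y : Matrix (Fin 3) (Fin cj) ℝ)
    (p : Fin ci) (q : Fin cj) : ℝ :=
  Real.sqrt (∑ r : Fin 3, (X r p - Y r q) ^ 2)

/-- Rigid (Euclidean) action `g·X = QX + t1ᵀ`, acting columnwise by `x ↦ Qx + t`. -/
def rigid {c : ℕ} (Q : Matrix (Fin 3) (Fin 3) ℝ) (t : Fin 3 → ℝ)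
    (X : Matrix (Fin 3) (Fin c) ℝ) : Matrix (Fin 3) (Fin c) ℝ :=
  Matrix.of fun r p => (∑ s : Fin 3, Q r s * X s p) + t r

/-- Geometric relation extractor `T_R(X_i, X_j) = A_iᵀ ((w_i w_jᵀ) ⊙ D(X_i, X_j)) A_j`. -/
def TR {ci cj d : ℕ} (Ai : Matrix (Fin ci) (Fin d) ℝ) (Aj : Matrix (Fin cj) (Fin d) ℝ)
    (wi : Fin ci → ℝ) (wj : Fin cj → ℝ)
    (X : Matrix (Fin 3) (Fin ci) ℝ) (Y : Matrix (Fin 3) (Fin cj) ℝ) :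
    Matrix (Fin d) (Fin d) ℝ :=
  Aiᵀ * (Matrix.of fun p q => wi p * wj q * colDist X Y p q) * Aj

/-- Frobenius norm of a real matrix. -/
def frob {n m : ℕ} (M : Matrix (Fin n) (Fin m) ℝ) : ℝ :=
  Real.sqrt (∑ i : Fin n, ∑ j : Fin m, (M i j) ^ 2)

/-- Average pooling of `s ∈ ℝ^C` with window size `C − c + 1` and stride 1. -/
def avgPool {c C : ℕ} (hc : c ≤ C) (s : Fin C → ℝ) : Fin c → ℝ :=
  fun k => (∑ m : Fin (C - c + 1), s ⟨k.val + m.val, by omega⟩) / ((C - c + 1 : ℕ) : ℝ)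

/-- Geometric message scaler `T_S(X, s) = X · diag(s')`. -/
def TS {c C : ℕ} (hc : c ≤ C) (X : Matrix (Fin 3) (Fin c) ℝ) (s : Fin C → ℝ) :
    Matrix (Fin 3) (Fin c) ℝ :=
  Matrix.of fun r p => X r p * avgPool hc s p

/-- The per-vertex parameters and topology of one graph: attribute matrices `A_i`,
channel weights `w_i`, neighborhoods `N`, and the channel-size bound `c(i) ≤ C`. -/
structure GraphParams (V : Type*) (d m' C : ℕ) (c : V → ℕ) where
  A : (i : V) → Matrix (Fin (c i)) (Fin d) ℝ
  w : (i : V) → Fin (c i) → ℝ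
  N : V → Finset V
  hC : ∀ i, c i ≤ C

/-- The (arbitrary) functions `φ_m`, `φ_x`, `φ_h` of one message-passing layer. -/
structure LayerFuns (d dh m' C : ℕ) where
  φm : (Fin dh → ℝ) → (Fin dh → ℝ) → Matrix (Fin d) (Fin d) ℝ → (Fin m' → ℝ)
  φx : (Fin m' → ℝ) → (Fin C → ℝ)
  φh : (Fin dh → ℝ) → (Fin m' → ℝ) → (Fin dh → ℝ)

variable {V : Type*} {d dh m' C : ℕ}

/-- Non-geometric message `m_{ij}`. -/
def msgOf {c : V → ℕ} (G : GraphParams V d m' C c) (F : LayerFuns d dh m' C)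
    (h : V → Fin dh → ℝ) (X : (i : V) → Matrix (Fin 3) (Fin (c i)) ℝ)
    (i j : V) : Fin m' → ℝ :=
  F.φm (h i) (h j)
    ((frob (TR (G.A i) (G.A j) (G.w i) (G.w j) (X i) (X j)) + 1)⁻¹ •
      TR (G.A i) (G.A j) (G.w i) (G.w j) (X i) (X j))

/-- Geometric message `X_{ij} = T_S(X_i − μ_j 1ᵀ, φ_x(m_{ij}))`. -/
def xMsgOf {c : V → ℕ} (G : GraphParams V d m' C c) (F : LayerFuns d dh m' C)
    (h : V → Fin dh → ℝ) (X : (i : V) → Matrix (Fin 3) (Fin (c i)) ℝ)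
    (i j : V) : Matrix (Fin 3) (Fin (c i)) ℝ :=
  TS (G.hC i) (Matrix.of fun r p => X i r p - (∑ q : Fin (c j), X j r q) / ((c j : ℕ) : ℝ))
    (F.φx (msgOf G F h X i j))

/-- Hidden-state update `h'(i) = φ_h(h(i), Σ_{j ∈ N(i)} m_{ij})`. -/
def hOut {c : V → ℕ} (G : GraphParams V d m' C c) (F : LayerFuns d dh m' C)
    (h : V → Fin dh → ℝ) (X : (i : V) → Matrix (Fin 3) (Fin (c i)) ℝ)
    (i : V) : Fin dh → ℝ :=
  F.φh (h i) (∑ j ∈ G.N i, msgOf G F h X i j)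

/-- Coordinate update `X'(i) = X(i) + (1/|N(i)|) Σ_{j ∈ N(i)} X_{ij}`. -/
def xOut {c : V → ℕ} (G : GraphParams V d m' C c) (F : LayerFuns d dh m' C)
    (h : V → Fin dh → ℝ) (X : (i : V) → Matrix (Fin 3) (Fin (c i)) ℝ)
    (i : V) : Matrix (Fin 3) (Fin (c i)) ℝ :=
  X i + (((G.N i).card : ℝ))⁻¹ • ∑ j ∈ G.N i, xMsgOf G F h X i j

/-- The full state of the encoder: hidden states and coordinates of the
epitope-with-shadow-paratope graph (`E`) and of the antibody graph (`A`). -/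
structure EncState (VE VA : Type*) (dh : ℕ) (cE : VE → ℕ) (cA : VA → ℕ) where
  hE : VE → Fin dh → ℝ
  hA : VA → Fin dh → ℝ
  XE : (i : VE) → Matrix (Fin 3) (Fin (cE i)) ℝ
  XA : (j : VA) → Matrix (Fin 3) (Fin (cA j)) ℝ

variable {VE VA ιS : Type*}

/-- Copy the hidden states of the native paratope onto the shadow paratope:
`h(eS k) := hA(eP k)`. -/
def copyToShadow (eS : ιS → VE) (eP : ιS → VA)
    (hE : VE → Fin dh → ℝ) (hA : VA → Fin dh → ℝ) : VE → Fin dh → ℝ :=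
  fun i => if hk : ∃ k, eS k = i then hA (eP (Classical.choose hk)) else hE i

/-- Copy the hidden states of the shadow paratope back onto the native paratope:
`h(eP k) := hE(eS k)`. -/
def copyToNative (eS : ιS → VE) (eP : ιS → VA)
    (hE : VE → Fin dh → ℝ) (hA : VA → Fin dh → ℝ) : VA → Fin dh → ℝ :=
  fun j => if hk : ∃ k, eP k = j then hE (eS (Classical.choose hk)) else hA j

/-- One round of the alternating encoder: a message-passing layer on the antibody graph,
sharing of hidden states to the shadow paratope, a message-passing layer on the
epitope graph, and sharing of hidden states back to the native paratope. -/
def encStep {cE : VE → ℕ} {cA : VA → ℕ}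
    (GE : GraphParams VE d m' C cE) (GA : GraphParams VA d m' C cA)
    (eS : ιS → VE) (eP : ιS → VA)
    (FE FA : ℕ → LayerFuns d dh m' C) (l : ℕ)
    (st : EncState VE VA dh cE cA) : EncState VE VA dh cE cA :=
  let hA1 := fun j => hOut GA (FA l) st.hA st.XA j
  let XA1 := fun j => xOut GA (FA l) st.hA st.XA j
  let hE1 := copyToShadow eS eP st.hE hA1
  let hE2 := fun i => hOut GE (FE l) hE1 st.XE i
  let XE1 := fun i => xOut GE (FE l) hE1 st.XE i
  let hA2 := copyToNative eS eP hE2 hA1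
  ⟨hE2, hA2, XE1, XA1⟩

/-- The `L`-layer alternating encoder. -/
def encoder {cE : VE → ℕ} {cA : VA → ℕ}
    (GE : GraphParams VE d m' C cE) (GA : GraphParams VA d m' C cA)
    (eS : ιS → VE) (eP : ιS → VA)
    (FE FA : ℕ → LayerFuns d dh m' C) :
    ℕ → EncState VE VA dh cE cA → EncState VE VA dh cE cA
  | 0, st => st
  | l + 1, st => encoder GE GA eS eP FE FA l (encStep GE GA eS eP FE FA l st)


/-- Softmax on `ℝ^n`. -/
def softmax {n : ℕ} (v : Fin n → ℝ) : Fin n → ℝ :=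
  fun i => Real.exp (v i) / ∑ j : Fin n, Real.exp (v j)

/-- The alignment loss of the native paratope onto the shadow paratope:
`Σ_{k} ‖Q X_A(eP k) + t 1ᵀ − X_E(eS k)‖_F²` (channels identified along `cE (eS k) = cA (eP k)`). -/
def paratopeAlignLoss [Fintype ιS] {cE : VE → ℕ} {cA : VA → ℕ}
    (eS : ιS → VE) (eP : ιS → VA) (hmatch : ∀ k, cE (eS k) = cA (eP k))
    (XE : (i : VE) → Matrix (Fin 3) (Fin (cE i)) ℝ)
    (XA : (j : VA) → Matrix (Fin 3) (Fin (cA j)) ℝ)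
    (Q : Matrix (Fin 3) (Fin 3) ℝ) (t : Fin 3 → ℝ) : ℝ :=
  ∑ k : ιS, ∑ r : Fin 3, ∑ p : Fin (cA (eP k)),
    (rigid Q t (XA (eP k)) r p - XE (eS k) r (Fin.cast (hmatch k).symm p)) ^ 2

/-- `(Q, t)` is a global minimizer over `O(3) × ℝ³` of the paratope alignment loss. -/
def IsDockMin [Fintype ιS] {cE : VE → ℕ} {cA : VA → ℕ}
    (eS : ιS → VE) (eP : ιS → VA) (hmatch : ∀ k, cE (eS k) = cA (eP k))
    (XE : (i : VE) → Matrix (Fin 3) (Fin (cE i)) ℝ)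
    (XA : (j : VA) → Matrix (Fin 3) (Fin (cA j)) ℝ)
    (Q : Matrix (Fin 3) (Fin 3) ℝ) (t : Fin 3 → ℝ) : Prop :=
  Qᵀ * Q = 1 ∧ ∀ (Q' : Matrix (Fin 3) (Fin 3) ℝ) (t' : Fin 3 → ℝ), Q'ᵀ * Q' = 1 →
    paratopeAlignLoss eS eP hmatch XE XA Q t ≤ paratopeAlignLoss eS eP hmatch XE XA Q' t'

section Rigid

variable {c : ℕ}

lemma rigid_eq (Q : Matrix (Fin 3) (Fin 3) ℝ) (t : Fin 3 → ℝ) (X : Matrix (Fin 3) (Fin c) ℝ) :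
    rigid Q t X = Q * X + replicateCol (Fin c) t := by
  ext r p
  simp [rigid, mul_apply]

lemma rigid_rigid (A B : Matrix (Fin 3) (Fin 3) ℝ) (a b : Fin 3 → ℝ)
    (X : Matrix (Fin 3) (Fin c) ℝ) :
    rigid A a (rigid B b X) = rigid (A * B) (A *ᵥ b + a) X := by
  simp only [rigid_eq, Matrix.mul_add, Matrix.mul_assoc, replicateCol_mulVec, replicateCol_add]
  abel

lemma sum_sq_mulVec_of_transpose_mul_self {n R : Type*} [Fintype n] [DecidableEq n]
    [CommSemiring R] {Q : Matrix n n R} (hQ : Qᵀ * Q = 1) (v : n → R) :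
    ∑ r, (Q *ᵥ v) r ^ 2 = ∑ r, v r ^ 2 := by
  simp only [sq]
  change (Q *ᵥ v) ⬝ᵥ (Q *ᵥ v) = v ⬝ᵥ v
  rw [dotProduct_mulVec, ← vecMul_transpose, vecMul_vecMul, hQ, vecMul_one]

lemma rigid_sub_rigid {ci cj : ℕ} (Q : Matrix (Fin 3) (Fin 3) ℝ) (t : Fin 3 → ℝ)
    (X : Matrix (Fin 3) (Fin ci) ℝ) (Y : Matrix (Fin 3) (Fin cj) ℝ) (p : Fin ci) (q : Fin cj)
    (r : Fin 3) :
    rigid Q t X r p - rigid Q t Y r q = (Q *ᵥ fun s => X s p - Y s q) r := by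
  simp [rigid, mulVec, dotProduct, mul_sub]

lemma sum_sq_rigid_sub_rigid {ci cj : ℕ} {Q : Matrix (Fin 3) (Fin 3) ℝ} (hQ : Qᵀ * Q = 1)
    (t : Fin 3 → ℝ) (X : Matrix (Fin 3) (Fin ci) ℝ) (Y : Matrix (Fin 3) (Fin cj) ℝ)
    (p : Fin ci) (q : Fin cj) :
    ∑ r, (rigid Q t X r p - rigid Q t Y r q) ^ 2 = ∑ r, (X r p - Y r q) ^ 2 := by
  simp only [rigid_sub_rigid]
  exact sum_sq_mulVec_of_transpose_mul_self hQ _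

end Rigid

lemma colDist_rigid {ci cj : ℕ} {Q : Matrix (Fin 3) (Fin 3) ℝ} (hQ : Qᵀ * Q = 1) (t : Fin 3 → ℝ)
    (X : Matrix (Fin 3) (Fin ci) ℝ) (Y : Matrix (Fin 3) (Fin cj) ℝ) :
    colDist (rigid Q t X) (rigid Q t Y) = colDist X Y := by
  ext p q
  rw [colDist, sum_sq_rigid_sub_rigid hQ, colDist]

lemma TR_rigid {ci cj : ℕ} {Q : Matrix (Fin 3) (Fin 3) ℝ} (hQ : Qᵀ * Q = 1) (t : Fin 3 → ℝ)
    (Ai : Matrix (Fin ci) (Fin d) ℝ) (Aj : Matrix (Fin cj) (Fin d) ℝ)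
    (wi : Fin ci → ℝ) (wj : Fin cj → ℝ) (X : Matrix (Fin 3) (Fin ci) ℝ)
    (Y : Matrix (Fin 3) (Fin cj) ℝ) :
    TR Ai Aj wi wj (rigid Q t X) (rigid Q t Y) = TR Ai Aj wi wj X Y := by
  rw [TR, colDist_rigid hQ, TR]

lemma columnMean_rigid {c : ℕ} (hc : c ≠ 0) (Q : Matrix (Fin 3) (Fin 3) ℝ) (t : Fin 3 → ℝ)
    (X : Matrix (Fin 3) (Fin c) ℝ) (r : Fin 3) :
    (∑ q, rigid Q t X r q) / (c : ℝ) = (Q *ᵥ fun s => (∑ q, X s q) / (c : ℝ)) r + t r := by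
  have hc' : (c : ℝ) ≠ 0 := Nat.cast_ne_zero.mpr hc
  simp only [rigid, of_apply, Finset.sum_add_distrib, Finset.sum_const, Finset.card_univ,
    Fintype.card_fin, nsmul_eq_mul, mulVec, dotProduct, mul_div_assoc', ← Finset.sum_div,
    Finset.mul_sum]
  rw [Finset.sum_comm]
  field_simp

lemma TS_eq_mul_diagonal {c : ℕ} (hc : c ≤ C) (X : Matrix (Fin 3) (Fin c) ℝ) (s : Fin C → ℝ) :
    TS hc X s = X * diagonal (avgPool hc s) := by
  ext r p
  simp [TS]

section Layer

variable {c : V → ℕ} (G : GraphParams V d m' C c) (F : LayerFuns d dh m' C)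
  (h : V → Fin dh → ℝ) (X : (i : V) → Matrix (Fin 3) (Fin (c i)) ℝ)
  {Q : Matrix (Fin 3) (Fin 3) ℝ} (t : Fin 3 → ℝ)

lemma msgOf_rigid (hQ : Qᵀ * Q = 1) :
    msgOf G F h (fun i => rigid Q t (X i)) = msgOf G F h X := by
  ext i j
  simp only [msgOf, TR_rigid hQ]

lemma hOut_rigid (hQ : Qᵀ * Q = 1) :
    hOut G F h (fun i => rigid Q t (X i)) = hOut G F h X := by
  ext i
  simp only [hOut, msgOf_rigid G F h X t hQ]

lemma xMsgOf_rigid (hpos : ∀ i, 0 < c i) (hQ : Qᵀ * Q = 1) (i j : V) :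
    xMsgOf G F h (fun i => rigid Q t (X i)) i j = Q * xMsgOf G F h X i j := by
  have hcentre : (of fun r p => rigid Q t (X i) r p
        - (∑ q, rigid Q t (X j) r q) / ((c j : ℕ) : ℝ))
      = Q * of fun r p => X i r p - (∑ q, X j r q) / ((c j : ℕ) : ℝ) := by
    ext r p
    rw [of_apply, columnMean_rigid (hpos j).ne']
    simp only [rigid, of_apply, mul_apply, mulVec, dotProduct, mul_sub, Finset.sum_sub_distrib]
    ring
  rw [xMsgOf, xMsgOf, msgOf_rigid G F h X t hQ, hcentre, TS_eq_mul_diagonal,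
    TS_eq_mul_diagonal, Matrix.mul_assoc]

lemma xOut_rigid (hpos : ∀ i, 0 < c i) (hQ : Qᵀ * Q = 1) :
    xOut G F h (fun i => rigid Q t (X i)) = fun i => rigid Q t (xOut G F h X i) := by
  ext1 i
  rw [xOut, xOut, Finset.sum_congr rfl fun j _ => xMsgOf_rigid G F h X t hpos hQ i j,
    ← Matrix.mul_sum, rigid_eq, rigid_eq, Matrix.mul_add, Matrix.mul_smul]
  abel

end Layer

def EncState.rigidMove {cE : VE → ℕ} {cA : VA → ℕ} (Q₁ : Matrix (Fin 3) (Fin 3) ℝ)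
    (t₁ : Fin 3 → ℝ) (Q₂ : Matrix (Fin 3) (Fin 3) ℝ) (t₂ : Fin 3 → ℝ)
    (st : EncState VE VA dh cE cA) : EncState VE VA dh cE cA :=
  ⟨st.hE, st.hA, fun i => rigid Q₁ t₁ (st.XE i), fun j => rigid Q₂ t₂ (st.XA j)⟩

section Encoder

variable {cE : VE → ℕ} {cA : VA → ℕ}
  (GE : GraphParams VE d m' C cE) (GA : GraphParams VA d m' C cA)
  (eS : ιS → VE) (eP : ιS → VA) (FE FA : ℕ → LayerFuns d dh m' C)
  {Q₁ Q₂ : Matrix (Fin 3) (Fin 3) ℝ} (t₁ t₂ : Fin 3 → ℝ)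

lemma encStep_rigidMove (hposE : ∀ i, 0 < cE i) (hposA : ∀ j, 0 < cA j)
    (hQ₁ : Q₁ᵀ * Q₁ = 1) (hQ₂ : Q₂ᵀ * Q₂ = 1) (l : ℕ) (st : EncState VE VA dh cE cA) :
    encStep GE GA eS eP FE FA l (st.rigidMove Q₁ t₁ Q₂ t₂)
      = (encStep GE GA eS eP FE FA l st).rigidMove Q₁ t₁ Q₂ t₂ := by
  simp only [encStep, EncState.rigidMove, hOut_rigid _ _ _ _ _ hQ₁, hOut_rigid _ _ _ _ _ hQ₂,
    xOut_rigid _ _ _ _ _ hposE hQ₁, xOut_rigid _ _ _ _ _ hposA hQ₂]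

lemma encoder_rigidMove (hposE : ∀ i, 0 < cE i) (hposA : ∀ j, 0 < cA j)
    (hQ₁ : Q₁ᵀ * Q₁ = 1) (hQ₂ : Q₂ᵀ * Q₂ = 1) (L : ℕ) (st : EncState VE VA dh cE cA) :
    encoder GE GA eS eP FE FA L (st.rigidMove Q₁ t₁ Q₂ t₂)
      = (encoder GE GA eS eP FE FA L st).rigidMove Q₁ t₁ Q₂ t₂ := by
  induction L generalizing st with
  | zero => rfl
  | succ L ih =>
    rw [encoder, encoder, encStep_rigidMove GE GA eS eP FE FA t₁ t₂ hposE hposA hQ₁ hQ₂, ih]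

end Encoder

section Docking

lemma transpose_mul_self_mul {n R : Type*} [Fintype n] [DecidableEq n] [CommSemiring R]
    {A B : Matrix n n R}
    (hA : Aᵀ * A = 1) (hB : Bᵀ * B = 1) : (A * B)ᵀ * (A * B) = 1 := by
  rw [transpose_mul, Matrix.mul_assoc, ← Matrix.mul_assoc Aᵀ, hA, Matrix.one_mul, hB]

lemma transpose_transpose_mul_transpose {n R : Type*} [Fintype n] [DecidableEq n] [CommRing R]
    {A : Matrix n n R}
    (hA : Aᵀ * A = 1) : Aᵀᵀ * Aᵀ = 1 := by
  rw [transpose_transpose, mul_eq_one_comm.mp hA]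

variable {Q₁ Q₂ : Matrix (Fin 3) (Fin 3) ℝ} (t₁ t₂ : Fin 3 → ℝ)

lemma rigid_conj_rigid {c : ℕ} (hQ₂ : Q₂ᵀ * Q₂ = 1) (Q : Matrix (Fin 3) (Fin 3) ℝ)
    (t : Fin 3 → ℝ) (X : Matrix (Fin 3) (Fin c) ℝ) :
    rigid (Q₁ * Q * Q₂ᵀ) (Q₁ *ᵥ t + t₁ - (Q₁ * Q * Q₂ᵀ) *ᵥ t₂) (rigid Q₂ t₂ X)
      = rigid Q₁ t₁ (rigid Q t X) := by
  rw [rigid_rigid, rigid_rigid, Matrix.mul_assoc (Q₁ * Q), hQ₂, Matrix.mul_one]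
  congr 1
  abel

lemma paratopeAlignLoss_rigid_conj [Fintype ιS] {cE : VE → ℕ} {cA : VA → ℕ}
    (eS : ιS → VE) (eP : ιS → VA) (hmatch : ∀ k, cE (eS k) = cA (eP k))
    (XE : (i : VE) → Matrix (Fin 3) (Fin (cE i)) ℝ) (XA : (j : VA) → Matrix (Fin 3) (Fin (cA j)) ℝ)
    (hQ₁ : Q₁ᵀ * Q₁ = 1) (hQ₂ : Q₂ᵀ * Q₂ = 1) (Q : Matrix (Fin 3) (Fin 3) ℝ) (t : Fin 3 → ℝ) :
    paratopeAlignLoss eS eP hmatch (fun i => rigid Q₁ t₁ (XE i)) (fun j => rigid Q₂ t₂ (XA j))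
        (Q₁ * Q * Q₂ᵀ) (Q₁ *ᵥ t + t₁ - (Q₁ * Q * Q₂ᵀ) *ᵥ t₂)
      = paratopeAlignLoss eS eP hmatch XE XA Q t := by
  unfold paratopeAlignLoss
  refine Finset.sum_congr rfl fun k _ => ?_
  rw [Finset.sum_comm, Finset.sum_comm (γ := Fin 3)]
  refine Finset.sum_congr rfl fun p _ => ?_
  rw [rigid_conj_rigid t₁ t₂ hQ₂, sum_sq_rigid_sub_rigid hQ₁]

lemma IsDockMin.rigid_conj [Fintype ιS] {cE : VE → ℕ} {cA : VA → ℕ}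
    {eS : ιS → VE} {eP : ιS → VA} {hmatch : ∀ k, cE (eS k) = cA (eP k)}
    {XE : (i : VE) → Matrix (Fin 3) (Fin (cE i)) ℝ} {XA : (j : VA) → Matrix (Fin 3) (Fin (cA j)) ℝ}
    {Q₀ : Matrix (Fin 3) (Fin 3) ℝ} {t₀ : Fin 3 → ℝ} (hmin : IsDockMin eS eP hmatch XE XA Q₀ t₀)
    (hQ₁ : Q₁ᵀ * Q₁ = 1) (hQ₂ : Q₂ᵀ * Q₂ = 1) :
    IsDockMin eS eP hmatch (fun i => rigid Q₁ t₁ (XE i)) (fun j => rigid Q₂ t₂ (XA j))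
      (Q₁ * Q₀ * Q₂ᵀ) (Q₁ *ᵥ t₀ + t₁ - (Q₁ * Q₀ * Q₂ᵀ) *ᵥ t₂) := by
  obtain ⟨hQ₀, hle⟩ := hmin
  refine ⟨transpose_mul_self_mul (transpose_mul_self_mul hQ₁ hQ₀)
    (transpose_transpose_mul_transpose hQ₂), fun Q' t' hQ' => ?_⟩
  -- every competitor `(Q', t')` is the conjugate of `(Q₁ᵀ Q' Q₂, Q₁ᵀ (Q' t₂ + t' - t₁))`
  have hQ : Q₁ * (Q₁ᵀ * Q' * Q₂) * Q₂ᵀ = Q' := by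
    rw [← Matrix.mul_assoc, ← Matrix.mul_assoc, mul_eq_one_comm.mp hQ₁, Matrix.one_mul,
      Matrix.mul_assoc, mul_eq_one_comm.mp hQ₂, Matrix.mul_one]
  have ht : Q₁ *ᵥ (Q₁ᵀ *ᵥ (Q' *ᵥ t₂ + t' - t₁)) + t₁ - Q' *ᵥ t₂ = t' := by
    rw [mulVec_mulVec, mul_eq_one_comm.mp hQ₁, one_mulVec]
    abel
  calc paratopeAlignLoss eS eP hmatch _ _ (Q₁ * Q₀ * Q₂ᵀ) (Q₁ *ᵥ t₀ + t₁ - (Q₁ * Q₀ * Q₂ᵀ) *ᵥ t₂)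
      = paratopeAlignLoss eS eP hmatch XE XA Q₀ t₀ :=
        paratopeAlignLoss_rigid_conj t₁ t₂ eS eP hmatch XE XA hQ₁ hQ₂ Q₀ t₀
    _ ≤ paratopeAlignLoss eS eP hmatch XE XA (Q₁ᵀ * Q' * Q₂) (Q₁ᵀ *ᵥ (Q' *ᵥ t₂ + t' - t₁)) :=
        hle _ _ (transpose_mul_self_mul (transpose_mul_self_mul
          (transpose_transpose_mul_transpose hQ₁) hQ') hQ₂)
    _ = paratopeAlignLoss eS eP hmatch _ _ Q' t' := by
        rw [← paratopeAlignLoss_rigid_conj t₁ t₂ eS eP hmatch XE XA hQ₁ hQ₂, hQ, ht]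

end Docking

theorem dyMEAN_E3_equivariant_general
    [Fintype ιS]
    {cE : VE → ℕ} {cA : VA → ℕ} {na : ℕ}
    (hposE : ∀ i, 0 < cE i) (hposA : ∀ j, 0 < cA j)
    (GE : GraphParams VE d m' C cE) (GA : GraphParams VA d m' C cA)
    (eS : ιS → VE) (eP : ιS → VA)
    (hmatch : ∀ k, cE (eS k) = cA (eP k))
    (FE FA : ℕ → LayerFuns d dh m' C)
    (φp : (Fin dh → ℝ) → (Fin na → ℝ))
    (L : ℕ) (st : EncState VE VA dh cE cA)
    (Q₀ : Matrix (Fin 3) (Fin 3) ℝ) (t₀ : Fin 3 → ℝ)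
    (hmin : IsDockMin eS eP hmatch
      (encoder GE GA eS eP FE FA L st).XE (encoder GE GA eS eP FE FA L st).XA Q₀ t₀)
    (Q₁ Q₂ : Matrix (Fin 3) (Fin 3) ℝ)
    (hQ₁ : Q₁ᵀ * Q₁ = 1) (hQ₂ : Q₂ᵀ * Q₂ = 1)
    (t₁ t₂ : Fin 3 → ℝ) :
    (∀ k : ιS,
      softmax (φp ((encoder GE GA eS eP FE FA L
          ⟨st.hE, st.hA, fun i => rigid Q₁ t₁ (st.XE i),
            fun j => rigid Q₂ t₂ (st.XA j)⟩).hA (eP k)))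
        = softmax (φp ((encoder GE GA eS eP FE FA L st).hA (eP k)))) ∧
    IsDockMin eS eP hmatch
        (encoder GE GA eS eP FE FA L
          ⟨st.hE, st.hA, fun i => rigid Q₁ t₁ (st.XE i),
            fun j => rigid Q₂ t₂ (st.XA j)⟩).XE
        (encoder GE GA eS eP FE FA L
          ⟨st.hE, st.hA, fun i => rigid Q₁ t₁ (st.XE i),
            fun j => rigid Q₂ t₂ (st.XA j)⟩).XA
        (Q₁ * Q₀ * Q₂ᵀ) (Q₁.mulVec t₀ + t₁ - (Q₁ * Q₀ * Q₂ᵀ).mulVec t₂) ∧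
    (∀ j : VA,
      rigid (Q₁ * Q₀ * Q₂ᵀ) (Q₁.mulVec t₀ + t₁ - (Q₁ * Q₀ * Q₂ᵀ).mulVec t₂)
          ((encoder GE GA eS eP FE FA L
            ⟨st.hE, st.hA, fun i => rigid Q₁ t₁ (st.XE i),
              fun j => rigid Q₂ t₂ (st.XA j)⟩).XA j)
        = rigid Q₁ t₁ (rigid Q₀ t₀ ((encoder GE GA eS eP FE FA L st).XA j))) := by
  have henc := encoder_rigidMove GE GA eS eP FE FA t₁ t₂ hposE hposA hQ₁ hQ₂ L st
  rw [EncState.rigidMove] at henc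
  rw [henc]
  exact ⟨fun k => rfl, hmin.rigid_conj t₁ t₂ hQ₁ hQ₂,
    fun j => rigid_conj_rigid t₁ t₂ hQ₂ Q₀ t₀ _⟩

/-- E(3)-equivariance of the single-pass dyMEAN network (encoder, prediction, docking):
transforming the input coordinates of the epitope-with-shadow-paratope graph by `(Q₁, t₁)`
and those of the antibody graph by `(Q₂, t₂)` (a) leaves all predicted amino-acid
distributions on the native paratope unchanged, and (b) the pair
`(Q₁ Q₀ Q₂ᵀ, Q₁ t₀ + t₁ − Q₁ Q₀ Q₂ᵀ t₂)` is a global minimizer of the transformed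
alignment problem, whose docked antibody coordinates equal `Q₁ X̃_j + t₁ 1ᵀ`. -/
theorem dyMEAN_E3_equivariant
    [Fintype VE] [Fintype VA] [Fintype ιS]
    {cE : VE → ℕ} {cA : VA → ℕ} {na : ℕ}
    (hposE : ∀ i, 0 < cE i) (hposA : ∀ j, 0 < cA j)
    (GE : GraphParams VE d m' C cE) (GA : GraphParams VA d m' C cA)
    (hNE : ∀ i, (GE.N i).Nonempty) (hNA : ∀ j, (GA.N j).Nonempty)
    (eS : ιS → VE) (eP : ιS → VA)
    (hinjS : Function.Injective eS) (hinjP : Function.Injective eP)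
    (hmatch : ∀ k, cE (eS k) = cA (eP k))
    (FE FA : ℕ → LayerFuns d dh m' C)
    (φp : (Fin dh → ℝ) → (Fin na → ℝ))
    (L : ℕ) (st : EncState VE VA dh cE cA)
    (Q₀ : Matrix (Fin 3) (Fin 3) ℝ) (t₀ : Fin 3 → ℝ)
    (hmin : IsDockMin eS eP hmatch
      (encoder GE GA eS eP FE FA L st).XE (encoder GE GA eS eP FE FA L st).XA Q₀ t₀)
    (Q₁ Q₂ : Matrix (Fin 3) (Fin 3) ℝ)
    (hQ₁ : Q₁ᵀ * Q₁ = 1) (hQ₂ : Q₂ᵀ * Q₂ = 1)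
    (t₁ t₂ : Fin 3 → ℝ) :
    (∀ k : ιS,
      softmax (φp ((encoder GE GA eS eP FE FA L
          ⟨st.hE, st.hA, fun i => rigid Q₁ t₁ (st.XE i),
            fun j => rigid Q₂ t₂ (st.XA j)⟩).hA (eP k)))
        = softmax (φp ((encoder GE GA eS eP FE FA L st).hA (eP k)))) ∧
    IsDockMin eS eP hmatch
        (encoder GE GA eS eP FE FA L
          ⟨st.hE, st.hA, fun i => rigid Q₁ t₁ (st.XE i),
            fun j => rigid Q₂ t₂ (st.XA j)⟩).XE
        (encoder GE GA eS eP FE FA L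
          ⟨st.hE, st.hA, fun i => rigid Q₁ t₁ (st.XE i),
            fun j => rigid Q₂ t₂ (st.XA j)⟩).XA
        (Q₁ * Q₀ * Q₂ᵀ) (Q₁.mulVec t₀ + t₁ - (Q₁ * Q₀ * Q₂ᵀ).mulVec t₂) ∧
    (∀ j : VA,
      rigid (Q₁ * Q₀ * Q₂ᵀ) (Q₁.mulVec t₀ + t₁ - (Q₁ * Q₀ * Q₂ᵀ).mulVec t₂)
          ((encoder GE GA eS eP FE FA L
            ⟨st.hE, st.hA, fun i => rigid Q₁ t₁ (st.XE i),
              fun j => rigid Q₂ t₂ (st.XA j)⟩).XA j)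
        = rigid Q₁ t₁ (rigid Q₀ t₀ ((encoder GE GA eS eP FE FA L st).XA j))) :=
  dyMEAN_E3_equivariant_general hposE hposA GE GA eS eP hmatch FE FA φp L st Q₀ t₀ hmin Q₁ Q₂ hQ₁
    hQ₂ t₁ t₂

end
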